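/- Let X be a real Banach space. Then the following statements are equivalent: (i) for every nonempty closed convex V ⊆ X and every nonempty compact F ⊆ X, rad_V(F) = rad_X(F) + d(V, cent_X(F)); (ii) for every nonempty closed convex V ⊆ X and every nonempty compact F ⊆ X, rad_V(F) = rad_X(F) + lim_{δ→0⁺} d(V, cent_X(F,δ)) (by monotonicity this limit exists and equals sup_{δ>0} d(V, cent_X(F,δ))); (iii) for every nonempty closed convex V ⊆ X and every nonempty finite F ⊆ X, rad_V(F) = rad_X(F) + d(V, cent_X(F)). -/

import Mathlib

open Filter Topology MeasureTheory

/-- `r(x,B) = sup{‖x − b‖ : b ∈ B}`. -/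
noncomputable def rMax {X : Type*} [NormedAddCommGroup X] (x : X) (B : Set X) : ℝ :=
  sSup ((fun b => ‖x - b‖) '' B)

/-- Restricted Chebyshev radius of `B` in `V`: `rad_V(B) = inf{r(v,B) : v ∈ V}`. -/
noncomputable def chebRad {X : Type*} [NormedAddCommGroup X] (V B : Set X) : ℝ :=
  sInf ((fun v => rMax v B) '' V)

/-- Restricted Chebyshev centers of `B` in `V`: `{v ∈ V : r(v,B) = rad_V(B)}`. -/
def chebCent {X : Type*} [NormedAddCommGroup X] (V B : Set X) : Set X :=
  {v | v ∈ V ∧ rMax v B = chebRad V B}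

/-- `diam(B) = sup{‖z₁ − z₂‖ : z₁, z₂ ∈ B}`. -/
noncomputable def setDiam {X : Type*} [NormedAddCommGroup X] (B : Set X) : ℝ :=
  sSup ((fun p : X × X => ‖p.1 - p.2‖) '' (B ×ˢ B))

/-- `d(A,B) = inf{‖a − b‖ : a ∈ A, b ∈ B}`. -/
noncomputable def setDist' {X : Type*} [NormedAddCommGroup X] (A B : Set X) : ℝ :=
  sInf ((fun p : X × X => ‖p.1 - p.2‖) '' (A ×ˢ B))

/-- `cent_X(B,δ) = {x ∈ X : r(x,B) ≤ rad_X(B) + δ}`. -/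
def chebCentDelta {X : Type*} [NormedAddCommGroup X] (B : Set X) (δ : ℝ) : Set X :=
  {x : X | rMax x B ≤ chebRad (Set.univ : Set X) B + δ}

/-! The three formulas are all equivalent to their special case `V = {x}`: every `x` lies within
`r(x,F) - rad_X(F)` of each `cent_X(F,δ)`. Given this for `F`, the inequality
`rad_V(F) ≥ rad_X(F) + sup_δ d(V, cent_X(F,δ))` follows pointwise in `v ∈ V` (the reverse one
always holds), and in a complete space a point of `cent_X(F,δ)` is moved by successive
approximation through `cent_X(F,δ/2ⁿ)` to a true centre at distance `≤ 4δ`, which identifies the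
supremum with `d(V, cent_X(F))`. For compact `F` the condition passes from finite `ε`-nets `t ⊆ F`
to `F`, since `r(·,t) ≤ r(·,F) ≤ r(·,t) + ε`. -/

section ChebyshevRadius

open Set Bornology

variable {X : Type*} [NormedAddCommGroup X] {V F : Set X}

theorem bddAbove_norm_sub_image (x : X) (hFb : IsBounded F) :
    BddAbove ((fun b => ‖x - b‖) '' F) := by
  obtain ⟨C, hC⟩ := isBounded_iff_forall_norm_le.1 hFb
  exact ⟨‖x‖ + C, forall_mem_image.2 fun b hb => (norm_sub_le x b).trans (by linarith [hC b hb])⟩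

theorem le_rMax (hFb : IsBounded F) {x b : X} (hb : b ∈ F) : ‖x - b‖ ≤ rMax x F :=
  le_csSup (bddAbove_norm_sub_image x hFb) (mem_image_of_mem _ hb)

theorem rMax_le (hF : F.Nonempty) {x : X} {M : ℝ} (h : ∀ b ∈ F, ‖x - b‖ ≤ M) : rMax x F ≤ M :=
  csSup_le (hF.image _) (forall_mem_image.2 h)

theorem rMax_nonneg (x : X) (F : Set X) : 0 ≤ rMax x F :=
  Real.sSup_nonneg (forall_mem_image.2 fun _ _ => norm_nonneg _)

theorem rMax_le_norm_sub_add (hF : F.Nonempty) (hFb : IsBounded F) (x y : X) :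
    rMax x F ≤ ‖x - y‖ + rMax y F :=
  rMax_le hF fun b hb =>
    (norm_sub_le_norm_sub_add_norm_sub x y b).trans (add_le_add_right (le_rMax hFb hb) _)

theorem rMax_mono {t : Set X} (hFb : IsBounded F) (ht : t.Nonempty) (htF : t ⊆ F) (x : X) :
    rMax x t ≤ rMax x F :=
  csSup_le_csSup (bddAbove_norm_sub_image x hFb) (ht.image _) (image_mono htF)

theorem lipschitzWith_rMax (hF : F.Nonempty) (hFb : IsBounded F) :
    LipschitzWith 1 fun x : X => rMax x F :=
  LipschitzWith.of_le_add fun x y => by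
    simpa [dist_eq_norm, add_comm] using rMax_le_norm_sub_add hF hFb x y

theorem chebRad_le_rMax {v : X} (hv : v ∈ V) : chebRad V F ≤ rMax v F :=
  csInf_le ⟨0, forall_mem_image.2 fun v _ => rMax_nonneg v F⟩ (mem_image_of_mem _ hv)

theorem le_chebRad (hV : V.Nonempty) {M : ℝ} (h : ∀ v ∈ V, M ≤ rMax v F) : M ≤ chebRad V F :=
  le_csInf (hV.image _) (forall_mem_image.2 h)

theorem chebRad_singleton (x : X) (F : Set X) : chebRad {x} F = rMax x F := by
  rw [chebRad, image_singleton, csInf_singleton]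

theorem chebRad_univ_mono {t : Set X} (hFb : IsBounded F) (ht : t.Nonempty) (htF : t ⊆ F) :
    chebRad univ t ≤ chebRad univ F :=
  le_chebRad univ_nonempty fun y _ => (chebRad_le_rMax (mem_univ y)).trans (rMax_mono hFb ht htF y)

theorem chebCentDelta_nonempty {δ : ℝ} (hδ : 0 < δ) : (chebCentDelta F δ).Nonempty := by
  obtain ⟨_, ⟨c, -, rfl⟩, hc⟩ :=
    exists_lt_of_csInf_lt (univ_nonempty.image _) (lt_add_of_pos_right (chebRad univ F) hδ)
  exact ⟨c, hc.le⟩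

theorem chebCentDelta_mono {δ δ' : ℝ} (h : δ ≤ δ') : chebCentDelta F δ ⊆ chebCentDelta F δ' :=
  fun _ hx => le_trans hx (add_le_add_right h _)

theorem isClosed_chebCentDelta (hF : F.Nonempty) (hFb : IsBounded F) (δ : ℝ) :
    IsClosed (chebCentDelta F δ) :=
  isClosed_le (lipschitzWith_rMax hF hFb).continuous continuous_const

theorem chebCent_subset_chebCentDelta {δ : ℝ} (hδ : 0 ≤ δ) :
    chebCent univ F ⊆ chebCentDelta F δ :=
  fun _ hc => hc.2.le.trans (le_add_of_nonneg_right hδ)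

theorem setDist'_le {A B : Set X} {a b : X} (ha : a ∈ A) (hb : b ∈ B) :
    setDist' A B ≤ ‖a - b‖ :=
  csInf_le ⟨0, forall_mem_image.2 fun _ _ => norm_nonneg _⟩ (mem_image_of_mem _ (mk_mem_prod ha hb))

theorem exists_norm_sub_lt_setDist'_add {A B : Set X} (hA : A.Nonempty) (hB : B.Nonempty)
    {ε : ℝ} (hε : 0 < ε) : ∃ a ∈ A, ∃ b ∈ B, ‖a - b‖ < setDist' A B + ε := by
  obtain ⟨_, ⟨p, hp, rfl⟩, h⟩ :=
    exists_lt_of_csInf_lt ((hA.prod hB).image _) (lt_add_of_pos_right (setDist' A B) hε)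
  exact ⟨p.1, hp.1, p.2, hp.2, h⟩

theorem setDist'_anti_left {A A' B : Set X} (hA : A.Nonempty) (hB : B.Nonempty) (h : A ⊆ A') :
    setDist' A' B ≤ setDist' A B :=
  le_of_forall_pos_le_add fun ε hε => by
    obtain ⟨a, ha, b, hb, hab⟩ := exists_norm_sub_lt_setDist'_add hA hB hε
    exact (setDist'_le (h ha) hb).trans hab.le

theorem setDist'_anti_right {A B B' : Set X} (hA : A.Nonempty) (hB : B.Nonempty) (h : B ⊆ B') :
    setDist' A B' ≤ setDist' A B :=
  le_of_forall_pos_le_add fun ε hε => by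
    obtain ⟨a, ha, b, hb, hab⟩ := exists_norm_sub_lt_setDist'_add hA hB hε
    exact (setDist'_le ha (h hb)).trans hab.le

theorem setDist'_empty_right (A : Set X) : setDist' A ∅ = 0 := by
  rw [setDist', prod_empty, image_empty, Real.sInf_empty]

/-- The limit `lim_{δ → 0⁺} d(V, cent_X(F,δ))` of the paper, taken as a supremum. -/
noncomputable def distCentDeltaSup (V F : Set X) : ℝ :=
  sSup ((fun δ => setDist' V (chebCentDelta F δ)) '' Ioi (0 : ℝ))

theorem bddAbove_distCentDelta (hV : V.Nonempty) (hF : F.Nonempty) (hFb : IsBounded F) :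
    BddAbove ((fun δ => setDist' V (chebCentDelta F δ)) '' Ioi (0 : ℝ)) := by
  obtain ⟨v, hv⟩ := hV
  obtain ⟨f, hf⟩ := hF
  refine ⟨rMax v F + chebRad univ F + 1, forall_mem_image.2 fun δ hδ => ?_⟩
  obtain ⟨c, hc⟩ := chebCentDelta_nonempty (F := F) (lt_min hδ one_pos)
  have hcF : rMax c F ≤ chebRad univ F + 1 := hc.trans (by linarith [min_le_right δ 1])
  calc setDist' V (chebCentDelta F δ) ≤ ‖v - c‖ :=
        setDist'_le hv (chebCentDelta_mono (min_le_left δ 1) hc)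
    _ ≤ ‖v - f‖ + ‖f - c‖ := norm_sub_le_norm_sub_add_norm_sub v f c
    _ ≤ rMax v F + chebRad univ F + 1 := by
      rw [norm_sub_rev f c]
      linarith [le_rMax hFb (x := v) hf, le_rMax hFb (x := c) hf]

theorem setDist'_le_distCentDeltaSup (hV : V.Nonempty) (hF : F.Nonempty) (hFb : IsBounded F)
    {δ : ℝ} (hδ : 0 < δ) : setDist' V (chebCentDelta F δ) ≤ distCentDeltaSup V F :=
  le_csSup (bddAbove_distCentDelta hV hF hFb) (mem_image_of_mem _ hδ)

theorem distCentDeltaSup_le {M : ℝ} (h : ∀ δ > 0, setDist' V (chebCentDelta F δ) ≤ M) :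
    distCentDeltaSup V F ≤ M :=
  csSup_le (nonempty_Ioi.image _) (forall_mem_image.2 h)

theorem distCentDeltaSup_le_setDist'_chebCent (hV : V.Nonempty)
    (hcent : (chebCent univ F).Nonempty) :
    distCentDeltaSup V F ≤ setDist' V (chebCent univ F) :=
  distCentDeltaSup_le fun _ hδ =>
    setDist'_anti_right hV hcent (chebCent_subset_chebCentDelta hδ.le)

theorem chebRad_le_chebRad_univ_add_distCentDeltaSup (hV : V.Nonempty) (hF : F.Nonempty)
    (hFb : IsBounded F) : chebRad V F ≤ chebRad univ F + distCentDeltaSup V F := by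
  refine le_of_forall_pos_le_add fun ε hε => ?_
  obtain ⟨v, hv, c, hc, hvc⟩ :=
    exists_norm_sub_lt_setDist'_add hV (chebCentDelta_nonempty (half_pos hε)) (half_pos hε)
  have hcF : rMax c F ≤ chebRad univ F + ε / 2 := hc
  linarith [chebRad_le_rMax (F := F) hv, rMax_le_norm_sub_add hF hFb v c,
    setDist'_le_distCentDeltaSup hV hF hFb (half_pos hε)]

theorem chebCent_nonempty_of_rMax_eq {x : X}
    (h : rMax x F = chebRad univ F + setDist' {x} (chebCent univ F)) :
    (chebCent univ F).Nonempty := by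
  by_contra hempty
  -- `setDist' {x} ∅ = 0` is a junk value, which would make `x` itself a centre.
  rw [not_nonempty_iff_eq_empty.1 hempty, setDist'_empty_right, add_zero] at h
  exact hempty ⟨x, mem_univ x, h⟩

theorem exists_finite_subset_rMax_le_add (hF : F.Nonempty) (hFc : IsCompact F) {ε : ℝ}
    (hε : 0 < ε) : ∃ t ⊆ F, t.Nonempty ∧ t.Finite ∧ ∀ y : X, rMax y F ≤ rMax y t + ε := by
  obtain ⟨t, htF, htfin, hcover⟩ := hFc.finite_cover_balls hε
  have hnear : ∀ b ∈ F, ∃ f ∈ t, ‖f - b‖ < ε := fun b hb => by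
    obtain ⟨f, hf, hbf⟩ := mem_iUnion₂.1 (hcover hb)
    exact ⟨f, hf, by rwa [norm_sub_rev, ← dist_eq_norm]⟩
  obtain ⟨f₀, hf₀, -⟩ := hnear _ hF.some_mem
  refine ⟨t, htF, ⟨f₀, hf₀⟩, htfin, fun y => rMax_le hF fun b hb => ?_⟩
  obtain ⟨f, hf, hfb⟩ := hnear b hb
  linarith [norm_sub_le_norm_sub_add_norm_sub y f b, le_rMax htfin.isBounded (x := y) hf]

/-- Formula (ii) for all singletons `V = {x}`, where `≥` always holds. -/
def ChebCentDeltaWithinExcess (F : Set X) : Prop :=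
  ∀ x : X, ∀ δ > 0, setDist' {x} (chebCentDelta F δ) ≤ rMax x F - chebRad univ F

namespace ChebCentDeltaWithinExcess

theorem of_rMax_eq_add_setDist'
    (h : ∀ x, rMax x F = chebRad univ F + setDist' {x} (chebCent univ F)) :
    ChebCentDeltaWithinExcess F := fun x δ hδ => by
  calc setDist' {x} (chebCentDelta F δ) ≤ setDist' {x} (chebCent univ F) :=
        setDist'_anti_right (singleton_nonempty x) (chebCent_nonempty_of_rMax_eq (h x))
          (chebCent_subset_chebCentDelta hδ.le)
    _ = rMax x F - chebRad univ F := by rw [h x]; ring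

theorem of_rMax_eq_add_distCentDeltaSup (hF : F.Nonempty) (hFb : IsBounded F)
    (h : ∀ x, rMax x F = chebRad univ F + distCentDeltaSup {x} F) :
    ChebCentDeltaWithinExcess F := fun x _ hδ => by
  linarith [h x, setDist'_le_distCentDeltaSup (singleton_nonempty x) hF hFb hδ]

theorem of_finite_subsets (hF : F.Nonempty) (hFc : IsCompact F)
    (h : ∀ t ⊆ F, t.Nonempty → t.Finite → ChebCentDeltaWithinExcess t) :
    ChebCentDeltaWithinExcess F := by
  intro x δ hδ
  refine le_of_forall_pos_le_add fun ε hε => ?_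
  obtain ⟨t, htF, htne, htfin, hrMax⟩ :=
    exists_finite_subset_rMax_le_add hF hFc (lt_min hε (half_pos hδ))
  have hε' : min ε (δ / 2) ≤ ε ∧ min ε (δ / 2) ≤ δ / 2 := ⟨min_le_left _ _, min_le_right _ _⟩
  have hrad : chebRad univ F - min ε (δ / 2) ≤ chebRad univ t :=
    le_chebRad univ_nonempty fun y _ => by linarith [chebRad_le_rMax (F := F) (mem_univ y), hrMax y]
  have hsub : chebCentDelta t (δ / 2) ⊆ chebCentDelta F δ := fun c hc => by
    have hct : rMax c t ≤ chebRad univ t + δ / 2 := hc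
    show rMax c F ≤ chebRad univ F + δ
    linarith [hrMax c, chebRad_univ_mono hFc.isBounded htne htF]
  calc setDist' {x} (chebCentDelta F δ) ≤ setDist' {x} (chebCentDelta t (δ / 2)) :=
        setDist'_anti_right (singleton_nonempty x) (chebCentDelta_nonempty (half_pos hδ)) hsub
    _ ≤ rMax x t - chebRad univ t := h t htF htne htfin x _ (half_pos hδ)
    _ ≤ rMax x F - chebRad univ F + ε := by linarith [rMax_mono hFc.isBounded htne htF x]

theorem chebRad_eq_add_distCentDeltaSup (h : ChebCentDeltaWithinExcess F) (hV : V.Nonempty)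
    (hF : F.Nonempty) (hFb : IsBounded F) :
    chebRad V F = chebRad univ F + distCentDeltaSup V F := by
  refine (chebRad_le_chebRad_univ_add_distCentDeltaSup hV hF hFb).antisymm
    (le_chebRad hV fun v hv => ?_)
  have : distCentDeltaSup V F ≤ rMax v F - chebRad univ F := distCentDeltaSup_le fun δ hδ =>
    (setDist'_anti_left (singleton_nonempty v) (chebCentDelta_nonempty hδ)
      (singleton_subset_iff.2 hv)).trans (h v δ hδ)
  linarith

theorem exists_mem_norm_sub_lt (h : ChebCentDeltaWithinExcess F) {δ η : ℝ} (hη : 0 < η) {y : X}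
    (hy : y ∈ chebCentDelta F δ) : ∃ z ∈ chebCentDelta F η, ‖y - z‖ < δ + η := by
  obtain ⟨a, ha, z, hz, hyz⟩ :=
    exists_norm_sub_lt_setDist'_add (singleton_nonempty y) (chebCentDelta_nonempty hη) hη
  rw [mem_singleton_iff.1 ha] at hyz
  have hy' : rMax y F ≤ chebRad univ F + δ := hy
  exact ⟨z, hz, by linarith [h y η hη]⟩

theorem exists_mem_chebCent_norm_sub_le [CompleteSpace X] (h : ChebCentDeltaWithinExcess F)
    (hF : F.Nonempty) (hFb : IsBounded F) {δ : ℝ} (hδ : 0 < δ) {x : X}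
    (hx : x ∈ chebCentDelta F δ) : ∃ c ∈ chebCent univ F, ‖x - c‖ ≤ 4 * δ := by
  set D : ℕ → ℝ := fun n => δ / 2 ^ n with hD
  have hD_anti : Antitone D := fun m n hmn =>
    div_le_div_of_nonneg_left hδ.le (by positivity) (pow_le_pow_right₀ one_le_two hmn)
  have step : ∀ n, ∀ y ∈ chebCentDelta F (D n),
      ∃ z ∈ chebCentDelta F (D (n + 1)), ‖y - z‖ ≤ 4 * δ / 2 / 2 ^ n := fun n y hy => by
    obtain ⟨z, hz, hyz⟩ := h.exists_mem_norm_sub_lt (η := D (n + 1)) (by positivity) hy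
    refine ⟨z, hz, hyz.le.trans ?_⟩
    calc D n + D (n + 1) ≤ D n + D n := add_le_add_right (hD_anti n.le_succ) _
      _ = 4 * δ / 2 / 2 ^ n := by simp only [hD]; ring
  choose next hnext_mem hnext_norm using step
  let u : (n : ℕ) → {y // y ∈ chebCentDelta F (D n)} := fun n =>
    Nat.rec ⟨x, by simpa [hD] using hx⟩ (fun n y => ⟨next n y.1 y.2, hnext_mem n y.1 y.2⟩) n
  have hdist : ∀ n, dist (u n).1 (u (n + 1)).1 ≤ 4 * δ / 2 / 2 ^ n := fun n => by
    rw [dist_eq_norm]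
    exact hnext_norm n _ (u n).2
  obtain ⟨c, hc⟩ := cauchySeq_tendsto_of_complete (cauchySeq_of_le_geometric_two hdist)
  have hc_mem : ∀ m, c ∈ chebCentDelta F (D m) := fun m =>
    (isClosed_chebCentDelta hF hFb _).mem_of_tendsto hc
      (eventually_atTop.2 ⟨m, fun n hn => chebCentDelta_mono (hD_anti hn) (u n).2⟩)
  have hD_lim : Tendsto (fun m => chebRad univ F + D m) atTop (𝓝 (chebRad univ F)) := by
    simpa using (tendsto_const_nhds.div_atTop
      (tendsto_pow_atTop_atTop_of_one_lt one_lt_two)).const_add (chebRad univ F)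
  have hc_le : rMax c F ≤ chebRad univ F := ge_of_tendsto' hD_lim hc_mem
  refine ⟨c, ⟨mem_univ c, hc_le.antisymm (chebRad_le_rMax (mem_univ c))⟩, ?_⟩
  rw [← dist_eq_norm]
  exact dist_le_of_le_geometric_two_of_tendsto₀ hdist hc

theorem chebRad_eq_add_setDist'_chebCent [CompleteSpace X] (h : ChebCentDeltaWithinExcess F)
    (hV : V.Nonempty) (hF : F.Nonempty) (hFb : IsBounded F) :
    chebRad V F = chebRad univ F + setDist' V (chebCent univ F) := by
  obtain ⟨x, hx⟩ := chebCentDelta_nonempty (F := F) one_pos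
  obtain ⟨c₀, hc₀, -⟩ := h.exists_mem_chebCent_norm_sub_le hF hFb one_pos hx
  rw [h.chebRad_eq_add_distCentDeltaSup hV hF hFb]
  congr 1
  refine (distCentDeltaSup_le_setDist'_chebCent hV ⟨c₀, hc₀⟩).antisymm
    (le_of_forall_pos_le_add fun ε hε => ?_)
  have hε5 : 0 < ε / 5 := by positivity
  obtain ⟨v, hv, y, hy, hvy⟩ := exists_norm_sub_lt_setDist'_add hV (chebCentDelta_nonempty hε5) hε5
  obtain ⟨c, hc, hyc⟩ := h.exists_mem_chebCent_norm_sub_le hF hFb hε5 hy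
  calc setDist' V (chebCent univ F) ≤ ‖v - c‖ := setDist'_le hv hc
    _ ≤ ‖v - y‖ + ‖y - c‖ := norm_sub_le_norm_sub_add_norm_sub v y c
    _ ≤ distCentDeltaSup V F + ε := by
      linarith [setDist'_le_distCentDeltaSup hV hF hFb hε5]

end ChebCentDeltaWithinExcess

end ChebyshevRadius

/-- Equivalence of the restricted-radius formulas over compact sets, over compact sets with
approximate centers (the limit as `δ → 0⁺` exists by monotonicity and equals the supremum
over `δ > 0`), and over finite sets. -/
theorem chebRad_formula_compact_iff_finite {X : Type*} [NormedAddCommGroup X]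
    [NormedSpace ℝ X] [CompleteSpace X] :
    ((∀ (V : Set X), V.Nonempty → IsClosed V → Convex ℝ V →
          ∀ (F : Set X), F.Nonempty → IsCompact F →
            chebRad V F = chebRad (Set.univ : Set X) F
              + setDist' V (chebCent (Set.univ : Set X) F)) ↔
        ∀ (V : Set X), V.Nonempty → IsClosed V → Convex ℝ V →
          ∀ (F : Set X), F.Nonempty → IsCompact F →
            chebRad V F = chebRad (Set.univ : Set X) F
              + sSup ((fun δ => setDist' V (chebCentDelta F δ)) '' Set.Ioi (0 : ℝ))) ∧
      ((∀ (V : Set X), V.Nonempty → IsClosed V → Convex ℝ V →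
          ∀ (F : Set X), F.Nonempty → IsCompact F →
            chebRad V F = chebRad (Set.univ : Set X) F
              + sSup ((fun δ => setDist' V (chebCentDelta F δ)) '' Set.Ioi (0 : ℝ))) ↔
        ∀ (V : Set X), V.Nonempty → IsClosed V → Convex ℝ V →
          ∀ (F : Set X), F.Nonempty → F.Finite →
            chebRad V F = chebRad (Set.univ : Set X) F
              + setDist' V (chebCent (Set.univ : Set X) F)) := by
  refine ⟨⟨fun H V hV _ _ F hF hFc => ?i_ii, fun H V hV _ _ F hF hFc => ?ii_i⟩,
    ⟨fun H V hV _ _ F hF hFfin => ?ii_iii, fun H V hV _ _ F hF hFc => ?iii_ii⟩⟩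
  case i_ii =>
    refine ChebCentDeltaWithinExcess.chebRad_eq_add_distCentDeltaSup ?_ hV hF hFc.isBounded
    exact .of_rMax_eq_add_setDist' fun x => (chebRad_singleton x F).symm.trans
      (H {x} (Set.singleton_nonempty x) isClosed_singleton (convex_singleton x) F hF hFc)
  case ii_i =>
    refine ChebCentDeltaWithinExcess.chebRad_eq_add_setDist'_chebCent ?_ hV hF hFc.isBounded
    exact .of_rMax_eq_add_distCentDeltaSup hF hFc.isBounded fun x =>
      (chebRad_singleton x F).symm.trans
        (H {x} (Set.singleton_nonempty x) isClosed_singleton (convex_singleton x) F hF hFc)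
  case ii_iii =>
    refine ChebCentDeltaWithinExcess.chebRad_eq_add_setDist'_chebCent ?_ hV hF hFfin.isBounded
    exact .of_rMax_eq_add_distCentDeltaSup hF hFfin.isBounded fun x =>
      (chebRad_singleton x F).symm.trans (H {x} (Set.singleton_nonempty x) isClosed_singleton
        (convex_singleton x) F hF hFfin.isCompact)
  case iii_ii =>
    refine ChebCentDeltaWithinExcess.chebRad_eq_add_distCentDeltaSup ?_ hV hF hFc.isBounded
    exact .of_finite_subsets hF hFc fun t _ ht htfin => .of_rMax_eq_add_setDist' fun x =>
      (chebRad_singleton x t).symm.trans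
        (H {x} (Set.singleton_nonempty x) isClosed_singleton (convex_singleton x) t ht htfin)
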